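/- Let q > 4l be a prime power and w = x^{a₁}y^{b₁}⋯x^{a_l}y^{b_l} with all a_i b_i coprime to q. Then the set Λ ⊆ F_{q²}^× of eigenvalues of elements of w(SL₂(F_q)) contains an element of multiplicative order at least 2√(q/l). -/

import Mathlib

/-!
Take `g = [[1, s], [0, 1]]` and `h = [[1, 0], [1, 1]]`. Then `s ↦ tr w(g, h)` is a polynomial of
degree `l` in `s` with leading coefficient `∏ aᵢ bᵢ ≠ 0`, so it takes at least `q / l` values.
Every trace `t` of an element of `SL₂(F_q)` is `λ + λ⁻¹` for an eigenvalue `λ ∈ F_{q²}^×`, and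
`λ`, `λ⁻¹` give the same trace. If all these eigenvalues had order at most `N`, the traces would
be at most `(Φ(N) + 2) / 2` in number, where `Φ(N) = ∑_{d ≤ N} φ(d)` bounds the number of elements
of order at most `N` in the cyclic group `F_{q²}^×`; since `2 Φ(N) + 4 ≤ N²` for `N ≥ 4`, this
forces `N ≥ 2 √(q / l)`.
-/

open Polynomial Matrix Finset
open scoped Nat

/-- Evaluation of the word `w = x^{a₁}y^{b₁}⋯x^{a_l}y^{b_l}` at a pair of group
elements. -/
def wordEval {G : Type*} [Group G] {l : ℕ} (a b : Fin l → ℤ) (g h : G) : G :=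
  (List.ofFn fun i : Fin l => g ^ a i * h ^ b i).prod

theorem map_wordEval {G H : Type*} [Group G] [Group H] (f : G →* H) {l : ℕ} (a b : Fin l → ℤ)
    (g h : G) : f (wordEval a b g h) = wordEval a b (f g) (f h) := by
  simp [wordEval, map_list_prod, List.map_ofFn, Function.comp_def]

namespace Matrix.SpecialLinearGroup

variable {ι R S : Type*} [DecidableEq ι] [Fintype ι] [CommRing R] [CommRing S]

theorem transvection_zpow {i j : ι} (hij : i ≠ j) (c : R) (n : ℤ) :
    transvection hij c ^ n = transvection hij (n • c) := by
  let hom : Multiplicative R →* SpecialLinearGroup ι R :=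
    MonoidHom.mk' (fun c => transvection hij c.toAdd) fun _ _ => transvection_add hij _ _
  exact (map_zpow hom (.ofAdd c) n).symm

theorem map_transvection (f : R →+* S) {i j : ι} (hij : i ≠ j) (c : R) :
    map f (transvection hij c) = transvection hij (f c) := by
  ext
  simp [transvection_coe, one_apply, single_apply, apply_ite f]

theorem coe_transvection_mul_transvection (x y : R) :
    (transvection zero_ne_one x * transvection one_ne_zero y : SpecialLinearGroup (Fin 2) R) =
      !![1 + x * y, x; y, 1] := by
  ext i j
  fin_cases i <;> fin_cases j <;> simp [transvection_coe, mul_apply, Fin.sum_univ_two]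

theorem add_inv_eq_trace_of_hasEigenvalue {K : Type*} [Field K]
    (g : SpecialLinearGroup (Fin 2) K) {x : K}
    (hx : Module.End.HasEigenvalue (Matrix.toLin' (g : Matrix (Fin 2) (Fin 2) K)) x) :
    x ≠ 0 ∧ x + x⁻¹ = trace (g : Matrix (Fin 2) (Fin 2) K) := by
  rw [Module.End.hasEigenvalue_iff_isRoot_charpoly, Matrix.charpoly_toLin', charpoly_fin_two,
    det_coe] at hx
  have hroot : x ^ 2 - trace (g : Matrix (Fin 2) (Fin 2) K) * x + 1 = 0 := by simpa using hx
  have hx0 : x ≠ 0 := by rintro rfl; simp at hroot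
  refine ⟨hx0, ?_⟩
  field_simp
  linear_combination hroot

end Matrix.SpecialLinearGroup

open Matrix.SpecialLinearGroup

theorem Matrix.list_prod_fin_two_of_forall_apply_one_zero_eq_zero {R : Type*} [CommRing R]
    (L : List (Matrix (Fin 2) (Fin 2) R)) (h : ∀ M ∈ L, M 1 0 = 0) :
    L.prod 0 0 = (L.map (· 0 0)).prod ∧ L.prod 1 0 = 0 := by
  induction L with
  | nil => simp
  | cons M L ih =>
    obtain ⟨h00, h10⟩ := ih fun N hN => h N (List.mem_cons_of_mem _ hN)
    have hM : M 1 0 = 0 := h M List.mem_cons_self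
    simp [mul_apply, Fin.sum_univ_two, h00, h10, hM]

theorem Matrix.trace_list_prod_fin_two_of_forall_row_one_eq_zero {R : Type*} [CommRing R]
    (L : List (Matrix (Fin 2) (Fin 2) R)) (hL : L ≠ []) (h : ∀ M ∈ L, M 1 = 0) :
    trace L.prod = (L.map (· 0 0)).prod := by
  obtain ⟨M, L, rfl⟩ := List.exists_cons_of_ne_nil hL
  have hM : M 1 = 0 := h M List.mem_cons_self
  obtain ⟨h00, h10⟩ := list_prod_fin_two_of_forall_apply_one_zero_eq_zero L
    fun N hN => congrFun (h N (List.mem_cons_of_mem _ hN)) 0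
  simp [trace_fin_two, mul_apply, Fin.sum_univ_two, h00, h10, hM]

theorem Matrix.coeff_trace_eq_trace_coeff_matPolyEquiv {R n : Type*} [CommRing R] [Fintype n]
    [DecidableEq n] (M : Matrix n n R[X]) (k : ℕ) :
    (trace M).coeff k = trace ((matPolyEquiv M).coeff k) := by
  simp [trace]

theorem card_le_natDegree_mul_card_image_eval {K : Type*} [Field K] [Fintype K] [DecidableEq K]
    (P : K[X]) (hP : 0 < P.natDegree) :
    Fintype.card K ≤ P.natDegree * #(univ.image fun s => P.eval s) := by
  refine card_le_mul_card_image univ _ fun t _ => ?_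
  have hPt : P - C t ≠ 0 := fun h => hP.ne' (by rw [sub_eq_zero.mp h, natDegree_C])
  rw [← natDegree_sub_C (a := t)]
  refine card_le_degree_of_subset_roots fun s hs => ?_
  simp_all [mem_roots hPt]

section TracePolynomial

variable {R : Type*} [CommRing R]

noncomputable def transvectionWord {l : ℕ} (a b : Fin l → ℤ) (s : R) :
    SpecialLinearGroup (Fin 2) R :=
  wordEval a b (transvection zero_ne_one s) (transvection one_ne_zero 1)

/-- Through `matPolyEquiv`, each factor of `transvectionWord a b X` has degree `1` in `X` with
upper triangular leading coefficient `!![x * y, x; 0, 0]`, so the degree-`l` coefficient of the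
word is a product of such matrices and its trace is `∏ xᵢ yᵢ`. -/
noncomputable def transvectionFactor (x y : R) : (Matrix (Fin 2) (Fin 2) R)[X] :=
  matPolyEquiv
    (SpecialLinearGroup.transvection zero_ne_one (C x * X) *
      SpecialLinearGroup.transvection one_ne_zero (C y) : SpecialLinearGroup (Fin 2) R[X])

theorem natDegree_transvectionFactor_le (x y : R) : (transvectionFactor x y).natDegree ≤ 1 := by
  refine natDegree_le_iff_coeff_eq_zero.mpr fun k hk => ?_
  obtain ⟨hk0, hk1⟩ : k ≠ 0 ∧ 1 ≠ k := by omega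
  rw [transvectionFactor, coe_transvection_mul_transvection]
  ext i j
  fin_cases i <;> fin_cases j <;> simp [coeff_X, coeff_C, coeff_one, hk0, hk1]

theorem coeff_one_transvectionFactor (x y : R) :
    (transvectionFactor x y).coeff 1 = !![x * y, x; 0, 0] := by
  rw [transvectionFactor, coe_transvection_mul_transvection]
  ext i j
  fin_cases i <;> fin_cases j <;> simp [coeff_C, coeff_one]

variable {l : ℕ} (a b : Fin l → ℤ)

theorem trace_transvectionWord_eq_eval (s : R) :
    trace (transvectionWord a b s : Matrix (Fin 2) (Fin 2) R) =
      (trace (transvectionWord a b (X : R[X]) : Matrix (Fin 2) (Fin 2) R[X])).eval s := by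
  have hmap :
      SpecialLinearGroup.map (evalRingHom s) (transvectionWord a b X) = transvectionWord a b s := by
    simp [transvectionWord, map_wordEval, map_transvection]
  rw [← hmap, ← coe_evalRingHom, AddMonoidHom.map_trace]
  rfl

theorem matPolyEquiv_transvectionWord_X :
    matPolyEquiv (transvectionWord a b (X : R[X]) : Matrix (Fin 2) (Fin 2) R[X]) =
      (List.ofFn fun i => transvectionFactor (a i : R) (b i)).prod := by
  rw [transvectionWord, wordEval, ← SpecialLinearGroup.coeMonoidHom_apply, map_list_prod,
    map_list_prod, List.map_ofFn, List.map_ofFn]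
  refine congrArg List.prod (List.ofFn_inj.mpr (funext fun i => ?_))
  simp [transvectionFactor, transvection_zpow, zsmul_eq_mul]

theorem natDegree_trace_transvectionWord_X_le :
    (trace (transvectionWord a b (X : R[X]) : Matrix (Fin 2) (Fin 2) R[X])).natDegree ≤ l := by
  have hdeg : (matPolyEquiv
      (transvectionWord a b (X : R[X]) : Matrix (Fin 2) (Fin 2) R[X])).natDegree ≤ l := by
    rw [matPolyEquiv_transvectionWord_X]
    refine (natDegree_list_prod_le _).trans ((List.sum_le_card_nsmul _ 1 ?_).trans (by simp))
    simp only [List.map_ofFn, List.mem_ofFn, Function.comp_apply]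
    rintro _ ⟨i, rfl⟩
    exact natDegree_transvectionFactor_le _ _
  refine natDegree_le_iff_coeff_eq_zero.mpr fun k hk => ?_
  rw [coeff_trace_eq_trace_coeff_matPolyEquiv, coeff_eq_zero_of_natDegree_lt (hdeg.trans_lt hk),
    trace_zero]

theorem coeff_trace_transvectionWord_X (hl : 0 < l) :
    (trace (transvectionWord a b (X : R[X]) : Matrix (Fin 2) (Fin 2) R[X])).coeff l =
      ∏ i, (a i * b i : R) := by
  have hprod := coeff_list_prod_of_natDegree_le
    (List.ofFn fun i => transvectionFactor (a i : R) (b i)) 1 (by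
      simp only [List.mem_ofFn]
      rintro _ ⟨i, rfl⟩
      exact natDegree_transvectionFactor_le _ _)
  simp only [List.length_ofFn, mul_one, List.map_ofFn, Function.comp_def,
    coeff_one_transvectionFactor] at hprod
  rw [coeff_trace_eq_trace_coeff_matPolyEquiv, matPolyEquiv_transvectionWord_X, hprod,
    trace_list_prod_fin_two_of_forall_row_one_eq_zero]
  · simp [List.prod_ofFn]
  · simpa using hl.ne'
  · simp only [List.mem_ofFn]
    rintro _ ⟨i, rfl⟩
    ext j
    fin_cases j <;> rfl

theorem card_le_mul_card_image_trace_transvectionWord {K : Type*} [Field K] [Fintype K]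
    [DecidableEq K] (hl : 0 < l) (hab : ∏ i, (a i * b i : K) ≠ 0) :
    Fintype.card K ≤
      l * #(univ.image fun s : K => trace (transvectionWord a b s : Matrix (Fin 2) (Fin 2) K)) := by
  have hdeg := natDegree_eq_of_le_of_coeff_ne_zero (natDegree_trace_transvectionWord_X_le a b)
    ((coeff_trace_transvectionWord_X a b hl).trans_ne hab)
  have := card_le_natDegree_mul_card_image_eval _ (hdeg ▸ hl)
  simpa only [hdeg, ← trace_transvectionWord_eq_eval] using this

end TracePolynomial

theorem exists_aeval_eq_zero_of_finrank_eq_two {F E : Type*} [Field F] [Field E] [Algebra F E]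
    [Finite E] (hE : Module.finrank F E = 2) (p : F[X]) (hp0 : 0 < p.natDegree)
    (hp2 : p.natDegree ≤ 2) : ∃ x : E, aeval x p = 0 := by
  obtain ⟨g, hg, hgp⟩ := WfDvdMonoid.exists_irreducible_factor
    (fun hu => hp0.ne' (natDegree_eq_zero_of_isUnit hu)) (ne_zero_of_natDegree_gt hp0)
  have := Fact.mk hg
  have hg0 : 0 < g.natDegree := hg.natDegree_pos
  have hg2 : g.natDegree ≤ 2 := (natDegree_le_of_dvd hgp (ne_zero_of_natDegree_gt hp0)).trans hp2
  obtain ⟨emb⟩ := FiniteField.nonempty_algHom_of_finrank_dvd (K := AdjoinRoot g) (L := E) (by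
    rw [(AdjoinRoot.powerBasis hg.ne_zero).finrank, AdjoinRoot.powerBasis_dim, hE]
    interval_cases g.natDegree <;> norm_num)
  refine ⟨emb (AdjoinRoot.root g), ?_⟩
  obtain ⟨h, rfl⟩ := hgp
  simp [aeval_algHom_apply, AdjoinRoot.aeval_eq, AdjoinRoot.mk_self]

theorem exists_hasEigenvalue_map_of_finrank_eq_two {F E : Type*} [Field F] [Field E]
    [Algebra F E] [Finite E] (hE : Module.finrank F E = 2) (M : Matrix (Fin 2) (Fin 2) F) :
    ∃ x : E, Module.End.HasEigenvalue (toLin' (M.map (algebraMap F E))) x := by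
  have hdeg : M.charpoly.natDegree = 2 := by simp [charpoly_natDegree_eq_dim]
  obtain ⟨x, hx⟩ := exists_aeval_eq_zero_of_finrank_eq_two hE M.charpoly (by omega) hdeg.le
  refine ⟨x, ?_⟩
  rw [Module.End.hasEigenvalue_iff_isRoot_charpoly, charpoly_toLin', charpoly_map, IsRoot,
    eval_map_algebraMap, hx]

theorem Matrix.SpecialLinearGroup.exists_unit_hasEigenvalue_map_add_inv_eq_trace
    {F E : Type*} [Field F] [Field E] [Algebra F E] [Finite E] (hE : Module.finrank F E = 2)
    (g : SpecialLinearGroup (Fin 2) F) :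
    ∃ x : Eˣ, Module.End.HasEigenvalue
        (Matrix.toLin' ((g : Matrix (Fin 2) (Fin 2) F).map (algebraMap F E))) x ∧
      (x : E) + ↑x⁻¹ = algebraMap F E (trace (g : Matrix (Fin 2) (Fin 2) F)) := by
  obtain ⟨x, hx⟩ := exists_hasEigenvalue_map_of_finrank_eq_two hE (g : Matrix (Fin 2) (Fin 2) F)
  obtain ⟨hx0, hsum⟩ := (map (algebraMap F E) g).add_inv_eq_trace_of_hasEigenvalue hx
  refine ⟨Units.mk0 x hx0, hx, ?_⟩
  simpa [AddMonoidHom.map_trace] using hsum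

theorem IsCyclic.card_filter_orderOf_le_le_sum_totient {G : Type*} [Group G] [Fintype G]
    [IsCyclic G] (N : ℕ) : #{x : G | orderOf x ≤ N} ≤ ∑ d ∈ range (N + 1), φ d := by
  classical
  calc #{x : G | orderOf x ≤ N}
      = ∑ d ∈ range (N + 1), #{x ∈ ({x : G | orderOf x ≤ N} : Finset G) | orderOf x = d} :=
        card_eq_sum_card_fiberwise fun x hx => by simpa [Nat.lt_succ_iff] using hx
    _ ≤ ∑ d ∈ range (N + 1), φ d := sum_le_sum fun d _ => by
        refine (card_le_card (filter_subset_filter _ (subset_univ _))).trans ?_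
        by_cases hd : d ∣ Fintype.card G
        · exact (IsCyclic.card_orderOf_eq_totient hd).le
        · rw [card_eq_zero.mpr (filter_eq_empty_iff.mpr
            fun x _ (hx : orderOf x = d) => hd (hx ▸ orderOf_dvd_card))]
          exact Nat.zero_le _

theorem two_mul_card_image_le_card_add_card_filter_inv_eq_self {G β : Type*} [Group G]
    [DecidableEq G] [DecidableEq β] (f : G → β) (hf : ∀ x, f x⁻¹ = f x) (S : Finset G)
    (hS : ∀ x ∈ S, x⁻¹ ∈ S) : 2 * #(S.image f) ≤ #S + #{x ∈ S | x⁻¹ = x} := by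
  set I := {x ∈ S | x⁻¹ = x}
  have hfiber : ∀ y ∈ S.image f, 2 ≤ #{x ∈ S | f x = y} + #{x ∈ I | f x = y} := by
    intro y hy
    obtain ⟨x, hxS, rfl⟩ := mem_image.mp hy
    by_cases hx : x⁻¹ = x
    · have hxS' : x ∈ ({x' ∈ S | f x' = f x} : Finset G) := by simp [hxS]
      have hxI : x ∈ ({x' ∈ I | f x' = f x} : Finset G) := by simp [I, hxS, hx]
      have := card_pos.mpr ⟨x, hxS'⟩
      have := card_pos.mpr ⟨x, hxI⟩
      omega
    · have hsub : ({x, x⁻¹} : Finset G) ⊆ {x' ∈ S | f x' = f x} := by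
        simp [insert_subset_iff, hxS, hS x hxS, hf]
      have := card_le_card hsub
      rw [card_pair (Ne.symm hx)] at this
      omega
  calc 2 * #(S.image f) = ∑ _y ∈ S.image f, 2 := by simp [mul_comm]
    _ ≤ ∑ y ∈ S.image f, (#{x ∈ S | f x = y} + #{x ∈ I | f x = y}) := sum_le_sum hfiber
    _ = #S + #I := by
      rw [sum_add_distrib, ← card_eq_sum_card_fiberwise fun x hx => mem_image_of_mem f hx,
        ← card_eq_sum_card_fiberwise fun x hx => mem_image_of_mem f (mem_filter.mp hx).1]

theorem Units.card_filter_inv_eq_self_le_two {K : Type*} [Field K] [DecidableEq K]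
    (S : Finset Kˣ) : #{x ∈ S | x⁻¹ = x} ≤ 2 := by
  refine (card_le_card (t := {1, -1}) fun x hx => ?_).trans card_le_two
  have hx : (x : K) * x = 1 := by
    rw [← Units.val_mul]
    nth_rewrite 1 [← (mem_filter.mp hx).2]
    simp
  rcases mul_self_eq_one_iff.mp hx with h | h <;> simp [Units.ext_iff, h]

theorem two_mul_card_le_sum_totient_add_two {K : Type*} [Field K] [Fintype K] [DecidableEq K]
    (N : ℕ) (T : Finset K) (hT : ∀ t ∈ T, ∃ x : Kˣ, orderOf x ≤ N ∧ (x : K) + ↑x⁻¹ = t) :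
    2 * #T ≤ ∑ d ∈ range (N + 1), φ d + 2 := by
  set S : Finset Kˣ := {x | orderOf x ≤ N}
  have hTS : T ⊆ S.image fun x : Kˣ => (x : K) + ↑x⁻¹ := fun t ht => by
    obtain ⟨x, hxN, rfl⟩ := hT t ht
    exact mem_image_of_mem _ (by simpa [S] using hxN)
  calc 2 * #T ≤ 2 * #(S.image fun x : Kˣ => (x : K) + ↑x⁻¹) := by gcongr
    _ ≤ #S + #{x ∈ S | x⁻¹ = x} :=
        two_mul_card_image_le_card_add_card_filter_inv_eq_self _ (fun x => by simp [add_comm])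
          S fun x hx => by simpa [S] using hx
    _ ≤ ∑ d ∈ range (N + 1), φ d + 2 :=
        add_le_add (IsCyclic.card_filter_orderOf_le_le_sum_totient N)
          (Units.card_filter_inv_eq_self_le_two S)

theorem two_mul_sum_totient_add_four_le_sq {N : ℕ} (hN : 4 ≤ N) :
    2 * ∑ d ∈ range (N + 1), φ d + 4 ≤ N ^ 2 := by
  induction N, hN using Nat.le_induction with
  | base => decide
  | succ N hN ih =>
    have := Nat.totient_lt (N + 1) (by omega)
    rw [sum_range_succ]
    nlinarith

theorem four_mul_le_mul_sq_of_two_mul_le {q l N : ℕ} (hq : 4 * l < q)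
    (h : 2 * q ≤ l * (∑ d ∈ range (N + 1), φ d + 2)) : 4 * q ≤ l * N ^ 2 := by
  rcases le_or_gt 4 N with hN | hN
  · nlinarith [two_mul_sum_totient_add_four_le_sq hN]
  · have : ∑ d ∈ range (N + 1), φ d ≤ 4 := by interval_cases N <;> decide
    nlinarith

theorem two_mul_sqrt_div_le {q l N : ℕ} (hl : 0 < l) (h : 4 * q ≤ l * N ^ 2) :
    2 * √((q : ℝ) / l) ≤ N := by
  have hl' : (0 : ℝ) < l := by exact_mod_cast hl
  rw [← Real.sqrt_sq (by positivity : (0 : ℝ) ≤ 2), ← Real.sqrt_mul (by positivity),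
    Real.sqrt_le_left (by positivity), mul_div_assoc', div_le_iff₀ hl']
  exact_mod_cast (by linarith : 2 ^ 2 * q ≤ N ^ 2 * l)

theorem word_image_has_eigenvalue_of_large_order_general
    (l : ℕ) (hl : 0 < l) (a b : Fin l → ℤ)
    (F : Type) [Field F] [Fintype F]
    (hq : 4 * l < Fintype.card F)
    (hpa : ∀ i, ¬ ((ringChar F : ℤ) ∣ a i)) (hpb : ∀ i, ¬ ((ringChar F : ℤ) ∣ b i))
    (E : Type) [Field E] [Algebra F E] (hE : Module.finrank F E = 2) :
    ∃ lam : E,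
      (∃ g h : Matrix.SpecialLinearGroup (Fin 2) F,
        Module.End.HasEigenvalue
          (Matrix.toLin'
            (((wordEval a b g h : Matrix.SpecialLinearGroup (Fin 2) F) :
                Matrix (Fin 2) (Fin 2) F).map (algebraMap F E))) lam) ∧
      2 * Real.sqrt ((Fintype.card F : ℝ) / l) ≤ (orderOf lam : ℝ) := by
  classical
  have : Module.Finite F E := Module.finite_of_finrank_eq_succ hE
  have : Finite E := Module.finite_of_finite F
  have := Fintype.ofFinite E
  choose lam hlam hsum using fun s : F =>
    (transvectionWord a b s).exists_unit_hasEigenvalue_map_add_inv_eq_trace hE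
  obtain ⟨s₀, -, hmax⟩ := univ.exists_max_image (fun s => orderOf (lam s)) univ_nonempty
  refine ⟨lam s₀, ⟨_, _, hlam s₀⟩, ?_⟩
  set T := univ.image fun s : F => trace (transvectionWord a b s : Matrix (Fin 2) (Fin 2) F)
  have hcast_ne_zero {n : ℤ} (hn : ¬ (ringChar F : ℤ) ∣ n) : (n : F) ≠ 0 :=
    fun h => hn ((CharP.intCast_eq_zero_iff F (ringChar F) n).mp h)
  have hcard : Fintype.card F ≤ l * #T := card_le_mul_card_image_trace_transvectionWord a b hl
    (prod_ne_zero_iff.mpr fun i _ => mul_ne_zero (hcast_ne_zero (hpa i)) (hcast_ne_zero (hpb i)))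
  have hpair : 2 * #T ≤ ∑ d ∈ range (orderOf (lam s₀) + 1), φ d + 2 := by
    rw [← card_image_of_injective T (algebraMap F E).injective]
    refine two_mul_card_le_sum_totient_add_two _ _ fun t ht => ?_
    obtain ⟨_, hs, rfl⟩ := mem_image.mp ht
    obtain ⟨s, -, rfl⟩ := mem_image.mp hs
    exact ⟨lam s, hmax s (mem_univ s), hsum s⟩
  rw [orderOf_units]
  exact two_mul_sqrt_div_le hl (four_mul_le_mul_sq_of_two_mul_le hq (by nlinarith))

/-- Let `q > 4l` be a prime power and `w = x^{a₁}y^{b₁}⋯x^{a_l}y^{b_l}`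
with all exponents nonzero and coprime to `q`. Then the set `Λ ⊆ F_{q²}^×` of
eigenvalues of elements of `w(SL₂(F_q))` contains an element of multiplicative order
at least `2√(q/l)`. -/
theorem word_image_has_eigenvalue_of_large_order
    (l : ℕ) (hl : 0 < l) (a b : Fin l → ℤ) (ha : ∀ i, a i ≠ 0) (hb : ∀ i, b i ≠ 0)
    (F : Type) [Field F] [Fintype F]
    (hq : 4 * l < Fintype.card F)
    (hpa : ∀ i, ¬ ((ringChar F : ℤ) ∣ a i)) (hpb : ∀ i, ¬ ((ringChar F : ℤ) ∣ b i))
    (E : Type) [Field E] [Algebra F E] (hE : Module.finrank F E = 2) :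
    ∃ lam : E,
      (∃ g h : Matrix.SpecialLinearGroup (Fin 2) F,
        Module.End.HasEigenvalue
          (Matrix.toLin'
            (((wordEval a b g h : Matrix.SpecialLinearGroup (Fin 2) F) :
                Matrix (Fin 2) (Fin 2) F).map (algebraMap F E))) lam) ∧
      2 * Real.sqrt ((Fintype.card F : ℝ) / l) ≤ (orderOf lam : ℝ) :=
  word_image_has_eigenvalue_of_large_order_general l hl a b F hq hpa hpb E hE
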